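/- If T and T′ are two spanning forests of the same graph (V, C) then |T| = |T′|, and there exists an invertible integer matrix Σ with entries in {−1, 0, 1} (with inverse also having integer entries) such that the tree-edge rows transform as Ω_f = Σ_{f′∈T′} Σ_{ff′} Ω_{f′} for all f ∈ T. -/
import Mathlib


/-- The incidence matrix of a finite directed graph.  Here the edge-index type `Eg` plays the
role of the capacitive edge set `C`, so `inc hd tl` is the matrix `Ω`. -/
def inc {Eg Vt : Type*} [DecidableEq Vt] (hd tl : Eg → Vt) : Matrix Eg Vt ℝ :=
  Matrix.of fun e v => if v = hd e then 1 else if v = tl e then -1 else 0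

/-- Undirected adjacency through the edges in `S`. -/
def Adj {Eg Vt : Type*} (hd tl : Eg → Vt) (S : Set Eg) (u w : Vt) : Prop :=
  ∃ e ∈ S, (tl e = u ∧ hd e = w) ∨ (hd e = u ∧ tl e = w)

/-- A closed walk of length `l + 1` through distinct edges of `S`:  edge `e j` joins `v j` and
`v (j+1)` (indices mod `l + 1`), with `σ j = ±1` recording the direction of traversal. -/
def IsCycleIn {Eg Vt : Type*} (hd tl : Eg → Vt) (S : Set Eg) (l : ℕ)
    (e : Fin (l + 1) → Eg) (v : Fin (l + 1) → Vt) (σ : Fin (l + 1) → ℤ) : Prop :=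
  (∀ j, e j ∈ S) ∧ Function.Injective e ∧
    ∀ j, (σ j = 1 ∧ tl (e j) = v j ∧ hd (e j) = v (j + 1)) ∨
         (σ j = -1 ∧ hd (e j) = v j ∧ tl (e j) = v (j + 1))

/-- `T` is a spanning forest of the undirected graph `(V, C)`: a subset of `C` containing no
cycles whose reachability relation agrees with that of `C`. -/
def IsSpanningForest {Eg Vt : Type*} (hd tl : Eg → Vt) (C T : Set Eg) : Prop :=
  T ⊆ C ∧ (∀ l e v σ, ¬ IsCycleIn hd tl T l e v σ) ∧
    ∀ u w, Relation.ReflTransGen (Adj hd tl T) u w ↔ Relation.ReflTransGen (Adj hd tl C) u w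

namespace Stmt10Aux

open Finset

variable {Eg Vt : Type*} [DecidableEq Vt] (hd tl : Eg → Vt)

/-- Integer incidence matrix. -/
def incZ (e : Eg) (v : Vt) : ℤ :=
  if v = hd e then 1 else if v = tl e then -1 else 0

def incident (e : Eg) (v : Vt) : Prop := hd e = v ∨ tl e = v

def step (e : Eg) (a b : Vt) : Prop := (tl e = a ∧ hd e = b) ∨ (hd e = a ∧ tl e = b)

def IsTrail (S : Set Eg) (n : ℕ) (e : Fin n → Eg) (v : Fin (n + 1) → Vt) : Prop :=
  (∀ j, e j ∈ S) ∧ Function.Injective e ∧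
    ∀ j : Fin n, step hd tl (e j) (v j.castSucc) (v j.succ)

lemma incZ_ne_zero {e : Eg} {v : Vt} (h : incZ hd tl e v ≠ 0) : incident hd tl e v := by
  unfold incZ at h
  unfold incident
  split_ifs at h with h1 h2
  · exact Or.inl h1.symm
  · exact Or.inr h2.symm
  · exact absurd rfl h

lemma incZ_eq {e : Eg} (hne : hd e ≠ tl e) (v : Vt) :
    incZ hd tl e v = (if v = hd e then 1 else 0) - (if v = tl e then 1 else 0) := by
  unfold incZ
  split_ifs with h1 h2
  · exact absurd (h1 ▸ h2) (by simpa using hne)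
  · rfl
  · rfl
  · rfl

/-- From a closed segment of a trail we can build a cycle. -/
lemma cycle_of_segment {S : Set Eg} {n : ℕ} {e : Fin n → Eg} {v : Fin (n + 1) → Vt}
    (ht : IsTrail hd tl S n e v) (a L : ℕ) (hL : 1 ≤ L) (haL : a + L = n)
    (hclose : v ⟨a + L, by omega⟩ = v ⟨a, by omega⟩) :
    ∃ l ce cv cσ, IsCycleIn hd tl S l ce cv cσ := by
  obtain ⟨hmem, hinj, hstp⟩ := ht
  obtain ⟨l, rfl⟩ : ∃ l, L = l + 1 := ⟨L - 1, by omega⟩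
  set V : ℕ → Vt := fun k => v ⟨min k n, by omega⟩ with hV
  have hstp' : ∀ k (hk : k < n), step hd tl (e ⟨k, hk⟩) (V k) (V (k + 1)) := by
    intro k hk
    have h1 : V k = v (⟨k, hk⟩ : Fin n).castSucc :=
      congrArg v (Fin.ext (by simp <;> omega))
    have h2 : V (k + 1) = v (⟨k, hk⟩ : Fin n).succ :=
      congrArg v (Fin.ext (by simp <;> omega))
    rw [h1, h2]
    exact hstp ⟨k, hk⟩
  have hcloseV : V (a + (l + 1)) = V a := by
    have h1 : V (a + (l + 1)) = v ⟨a + (l + 1), by omega⟩ :=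
      congrArg v (Fin.ext (by simp <;> omega))
    have h2 : V a = v ⟨a, by omega⟩ := congrArg v (Fin.ext (by simp <;> omega))
    rw [h1, h2, hclose]
  refine ⟨l, fun j => e ⟨a + j.val, by omega⟩, fun j => V (a + j.val),
    fun j => if (tl (e ⟨a + j.val, by omega⟩) = V (a + j.val) ∧
      hd (e ⟨a + j.val, by omega⟩) = V (a + ((j + 1 : Fin (l + 1))).val)) then 1 else -1,
    fun j => hmem _, ?_, ?_⟩
  · intro j j' hjj'
    have h2 : a + j.val = a + j'.val := congrArg Fin.val (hinj hjj')
    exact Fin.ext (by omega)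
  · intro j
    have hb := ((j + 1 : Fin (l + 1))).isLt
    have hstep : step hd tl (e ⟨a + j.val, by omega⟩) (V (a + j.val))
        (V (a + ((j + 1 : Fin (l + 1))).val)) := by
      have hadd := Fin.val_add_one j
      by_cases hj : j = Fin.last l
      · have hv1 : ((j + 1 : Fin (l + 1))).val = 0 := by rw [hadd, if_pos hj]
        have hjv : j.val = l := by rw [hj]; simp
        have hVeq : V (a + ((j + 1 : Fin (l + 1))).val) = V (a + j.val + 1) := by
          rw [hv1, Nat.add_zero, ← hcloseV]
          congr 1
          omega
        rw [hVeq]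
        exact hstp' (a + j.val) (by omega)
      · have hv1 : ((j + 1 : Fin (l + 1))).val = j.val + 1 := by rw [hadd, if_neg hj]
        rw [hv1, show a + (j.val + 1) = a + j.val + 1 from by omega]
        exact hstp' (a + j.val) (by omega)
    dsimp only
    split_ifs with hc
    · exact Or.inl ⟨rfl, hc⟩
    · rcases hstep with h | h
      · exact absurd h hc
      · exact Or.inr ⟨rfl, h⟩

lemma exists_leaf [Fintype Eg] {T : Set Eg}
    (hacyc : ∀ l e v σ, ¬ IsCycleIn hd tl T l e v σ)
    (S' : Finset Eg) (hsub : ∀ e ∈ S', e ∈ T) (hne' : S'.Nonempty) :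
    ∃ E ∈ S', ∃ x : Vt, incident hd tl E x ∧
      ∀ e₂ ∈ S', e₂ ≠ E → ¬ incident hd tl e₂ x := by
  classical
  by_contra hcon
  push_neg at hcon
  -- hcon : ∀ E ∈ S', ∀ x, incident E x → ∃ e₂ ∈ S', e₂ ≠ E ∧ incident e₂ x
  set P : ℕ → Prop := fun n => ∃ e v, IsTrail hd tl (↑S' : Set Eg) n e v with hP
  have hbound : ∀ n, P n → n ≤ Fintype.card Eg := by
    rintro n ⟨e, v, -, hinj, -⟩
    simpa using Fintype.card_le_of_injective e hinj
  obtain ⟨e₀, he₀⟩ := hne'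
  have hP1 : P 1 := by
    refine ⟨fun _ => e₀, fun j => if j.val = 0 then tl e₀ else hd e₀,
      fun _ => he₀, fun a b _ => Subsingleton.elim a b, ?_⟩
    intro j
    have hj : j = 0 := Subsingleton.elim _ _
    subst hj
    exact Or.inl ⟨rfl, rfl⟩
  set m : ℕ := Nat.findGreatest P (Fintype.card Eg) with hm
  have hPm : P m := Nat.findGreatest_spec (hbound 1 hP1) hP1
  have hm1 : 1 ≤ m := Nat.le_findGreatest (hbound 1 hP1) hP1
  have hmax : ¬ P (m + 1) := by
    intro h
    have := Nat.le_findGreatest (hbound _ h) h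
    omega
  obtain ⟨e, v, hmem, hinj, hstp⟩ := hPm
  set idx : Fin m := ⟨m - 1, by omega⟩ with hidx
  set E : Eg := e idx with hE
  set w : Vt := v (Fin.last m) with hw
  have hsuccidx : idx.succ = Fin.last m := Fin.ext (by simp [hidx] <;> omega)
  have hlaststep : step hd tl E (v idx.castSucc) w := by
    rw [hw, ← hsuccidx]; exact hstp idx
  have hEw : incident hd tl E w := by
    rcases hlaststep with ⟨-, h2⟩ | ⟨-, h2⟩
    · exact Or.inl h2
    · exact Or.inr h2
  obtain ⟨e', he'S, he'E, he'w⟩ := hcon E (hmem idx) w hEw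
  by_cases hr : ∃ i, e i = e'
  · -- e' occurs in the trail: extract a cycle
    obtain ⟨i, hi⟩ := hr
    have hine : i ≠ idx := by
      intro h; exact he'E (by rw [← hi, h, hE])
    have hival : i.val ≠ m - 1 := fun h => hine (Fin.ext h)
    have hwor : w = v i.castSucc ∨ w = v i.succ := by
      rcases hstp i with ⟨h1, h2⟩ | ⟨h1, h2⟩ <;> rcases he'w with h3 | h3
      · refine Or.inr ?_; rw [← h3, ← hi]; exact h2
      · refine Or.inl ?_; rw [← h3, ← hi]; exact h1
      · refine Or.inl ?_; rw [← h3, ← hi]; exact h1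
      · refine Or.inr ?_; rw [← h3, ← hi]; exact h2
    have hilt := i.isLt
    have hcyc : ∃ l ce cv cσ, IsCycleIn hd tl (↑S' : Set Eg) l ce cv cσ := by
      rcases hwor with hcl | hcl
      · -- w = v i.castSucc : segment from i to m
        refine cycle_of_segment hd tl ⟨hmem, hinj, hstp⟩ i.val (m - i.val)
          (by omega) (by omega) ?_
        have h1 : (⟨i.val + (m - i.val), by omega⟩ : Fin (m + 1)) = Fin.last m :=
          Fin.ext (by simp <;> omega)
        have h2 : (⟨i.val, by omega⟩ : Fin (m + 1)) = i.castSucc :=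
          Fin.ext (by simp)
        rw [h1, h2, ← hw, hcl]
      · -- w = v i.succ : segment from i+1 to m
        refine cycle_of_segment hd tl ⟨hmem, hinj, hstp⟩ (i.val + 1) (m - i.val - 1)
          (by omega) (by omega) ?_
        have h1 : (⟨i.val + 1 + (m - i.val - 1), by omega⟩ : Fin (m + 1)) = Fin.last m :=
          Fin.ext (by simp <;> omega)
        have h2 : (⟨i.val + 1, by omega⟩ : Fin (m + 1)) = i.succ :=
          Fin.ext (by simp)
        rw [h1, h2, ← hw, hcl]
    obtain ⟨l, ce, cv, cσ, h1, h2, h3⟩ := hcyc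
    exact hacyc l ce cv cσ ⟨fun j => hsub _ (h1 j), h2, h3⟩
  · -- e' not in the trail: extend it, contradicting maximality
    push_neg at hr
    set x : Vt := if hd e' = w then tl e' else hd e' with hx
    apply hmax
    refine ⟨Fin.snoc e e', Fin.snoc v x, ?_, ?_, ?_⟩
    · intro j
      induction j using Fin.lastCases with
      | last => simpa using he'S
      | cast i => simpa using hmem i
    · intro a b hab
      induction a using Fin.lastCases with
      | last =>
        induction b using Fin.lastCases with
        | last => rfl
        | cast b' =>
          rw [Fin.snoc_last, Fin.snoc_castSucc] at hab
          exact absurd hab.symm (hr b')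
      | cast a' =>
        induction b using Fin.lastCases with
        | last =>
          rw [Fin.snoc_last, Fin.snoc_castSucc] at hab
          exact absurd hab (hr a')
        | cast b' =>
          rw [Fin.snoc_castSucc, Fin.snoc_castSucc] at hab
          rw [hinj hab]
    · intro j
      induction j using Fin.lastCases with
      | last =>
        rw [Fin.snoc_last]
        have hc1 : (Fin.last m).castSucc = Fin.castSucc (Fin.last m) := rfl
        rw [hc1, Fin.snoc_castSucc, Fin.succ_last, Fin.snoc_last, ← hw]
        by_cases hh : hd e' = w
        · exact Or.inr ⟨hh, (if_pos hh).symm⟩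
        · rcases he'w with h3 | h3
          · exact absurd h3 hh
          · exact Or.inl ⟨h3, (if_neg hh).symm⟩
      | cast i =>
        rw [Fin.snoc_castSucc]
        have hc1 : (Fin.castSucc i).castSucc = Fin.castSucc i.castSucc := rfl
        rw [hc1, Fin.snoc_castSucc, Fin.succ_castSucc, Fin.snoc_castSucc]
        exact hstp i

lemma incident_pm {E : Eg} {x : Vt} (hEx : incident hd tl E x) (hne : hd E ≠ tl E) :
    incZ hd tl E x = 1 ∨ incZ hd tl E x = -1 := by
  rcases hEx with h | h
  · left; unfold incZ; rw [if_pos h.symm]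
  · right; unfold incZ
    rw [if_neg (fun hc : x = hd E => hne (hc ▸ h.symm ▸ rfl)), if_pos h.symm]

lemma leaf_eval [Fintype Eg] (c : Eg → ℤ) (E : Eg) (x : Vt)
    (h : ∀ a, c a ≠ 0 → a ≠ E → ¬ incident hd tl a x) :
    ∑ a, c a * incZ hd tl a x = c E * incZ hd tl E x := by
  apply Finset.sum_eq_single_of_mem E (Finset.mem_univ E)
  intro a _ haE
  by_cases ha : c a = 0
  · rw [ha, zero_mul]
  · have h0 : incZ hd tl a x = 0 := by
      by_contra h0
      exact h a ha haE (incZ_ne_zero hd tl h0)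
    rw [h0, mul_zero]

/-- Linear independence (over `ℤ`) of the incidence rows of an acyclic edge set. -/
lemma indep [Fintype Eg] {T : Set Eg} (hne : ∀ e : Eg, hd e ≠ tl e)
    (hacyc : ∀ l e v σ, ¬ IsCycleIn hd tl T l e v σ)
    (c : Eg → ℤ) (hsupp : ∀ e, c e ≠ 0 → e ∈ T)
    (hsum : ∀ v, ∑ e, c e * incZ hd tl e v = 0) : ∀ e, c e = 0 := by
  classical
  by_contra hc
  push_neg at hc
  obtain ⟨e₀, he₀⟩ := hc
  obtain ⟨E, hES, x, hEx, hleaf⟩ := exists_leaf hd tl hacyc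
    (Finset.univ.filter (fun a => c a ≠ 0))
    (fun a ha => hsupp a (by simpa using (Finset.mem_filter.mp ha).2))
    ⟨e₀, by simp [he₀]⟩
  have hcE : c E ≠ 0 := by simpa using (Finset.mem_filter.mp hES).2
  have hkey : c E * incZ hd tl E x = 0 :=
    (leaf_eval hd tl c E x (fun a ha haE => hleaf a (by simp [ha]) haE)).symm.trans (hsum x)
  rcases incident_pm hd tl hEx (hne E) with h | h <;> rw [h] at hkey <;> omega

/-- Coefficients representing a difference of vertex indicators over an acyclic edge set are
`0` or `±1`. -/
lemma coeff_pm [Fintype Eg] {T : Set Eg} (hne : ∀ e : Eg, hd e ≠ tl e)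
    (hacyc : ∀ l e v σ, ¬ IsCycleIn hd tl T l e v σ) :
    ∀ (N : ℕ) (c : Eg → ℤ) (u w : Vt),
      (Finset.univ.filter (fun a => c a ≠ 0)).card ≤ N →
      (∀ a, c a ≠ 0 → a ∈ T) →
      (∀ v, ∑ a, c a * incZ hd tl a v
        = (if v = w then 1 else 0) - (if v = u then 1 else 0)) →
      ∀ a, c a = 0 ∨ c a = 1 ∨ c a = -1 := by
  classical
  intro N
  induction N with
  | zero =>
    intro c u w hcard _ _ a
    left
    by_contra hca
    have hmem : a ∈ Finset.univ.filter (fun b => c b ≠ 0) := by simp [hca]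
    have := Finset.card_pos.mpr ⟨a, hmem⟩
    omega
  | succ N ih =>
    intro c u w hcard hsupp hsum a
    by_cases htriv : ∀ b, c b = 0
    · exact Or.inl (htriv a)
    push_neg at htriv
    obtain ⟨e₀, he₀⟩ := htriv
    obtain ⟨E, hES, x, hEx, hleaf⟩ := exists_leaf hd tl hacyc
      (Finset.univ.filter (fun b => c b ≠ 0))
      (fun b hb => hsupp b (by simpa using (Finset.mem_filter.mp hb).2))
      ⟨e₀, by simp [he₀]⟩
    have hcE : c E ≠ 0 := by simpa using (Finset.mem_filter.mp hES).2
    have hkey : c E * incZ hd tl E x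
        = (if x = w then 1 else 0) - (if x = u then 1 else 0) :=
      (leaf_eval hd tl c E x (fun b hb hbE => hleaf b (by simp [hb]) hbE)).symm.trans (hsum x)
    have hinc1 := incident_pm hd tl hEx (hne E)
    obtain ⟨o, hox, hEterm⟩ : ∃ o, o ≠ x ∧ ∀ v, c E * incZ hd tl E v
        = (c E * incZ hd tl E x) *
          ((if v = x then 1 else 0) - (if v = o then 1 else 0)) := by
      rcases hEx with hhd | htl
      · have hsx : incZ hd tl E x = 1 := by unfold incZ; rw [if_pos hhd.symm]
        refine ⟨tl E, fun h => hne E (hhd.trans h.symm), fun v => ?_⟩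
        rw [hsx, mul_one, incZ_eq hd tl (hne E), hhd]
      · have hnex : hd E ≠ x := fun h => hne E (h.trans htl.symm)
        have hsx : incZ hd tl E x = -1 := by
          unfold incZ
          rw [if_neg (fun hc : x = hd E => hnex hc.symm), if_pos htl.symm]
        refine ⟨hd E, hnex, fun v => ?_⟩
        rw [hsx, incZ_eq hd tl (hne E), htl]
        ring
    have hcEval : c E = 1 ∨ c E = -1 := by
      have htmem : ((if x = w then (1:ℤ) else 0) - (if x = u then 1 else 0)) = 1 ∨
          ((if x = w then (1:ℤ) else 0) - (if x = u then 1 else 0)) = 0 ∨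
          ((if x = w then (1:ℤ) else 0) - (if x = u then 1 else 0)) = -1 := by
        split_ifs <;> norm_num
      rcases hinc1 with h | h <;> rw [h] at hkey <;> omega
    by_cases haE : a = E
    · subst haE
      rcases hcEval with h | h
      · exact Or.inr (Or.inl h)
      · exact Or.inr (Or.inr h)
    -- peel off the leaf edge
    set c' : Eg → ℤ := Function.update c E 0 with hc'
    have hsum' : ∀ v, ∑ b, c' b * incZ hd tl b v
        = ((if v = w then 1 else 0) - (if v = u then 1 else 0)) - c E * incZ hd tl E v := by
      intro v
      have hterm : ∀ b, c' b * incZ hd tl b v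
          = c b * incZ hd tl b v - (if b = E then c E * incZ hd tl b v else 0) := by
        intro b
        by_cases hb : b = E
        · subst hb; simp [hc']
        · simp [hc', Function.update_of_ne hb, hb]
      rw [Finset.sum_congr rfl (fun b _ => hterm b), Finset.sum_sub_distrib, hsum v,
        Finset.sum_ite_eq' Finset.univ E (fun b => c E * incZ hd tl b v),
        if_pos (Finset.mem_univ E)]
    have hcard' : (Finset.univ.filter (fun b => c' b ≠ 0)).card ≤ N := by
      have hsubset : Finset.univ.filter (fun b => c' b ≠ 0)
          ⊆ (Finset.univ.filter (fun b => c b ≠ 0)).erase E := by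
        intro b hb
        have hb' : c' b ≠ 0 := by simpa using (Finset.mem_filter.mp hb).2
        have hbE : b ≠ E := by
          intro h; subst h; exact hb' (by simp [hc'])
        refine Finset.mem_erase.mpr ⟨hbE, ?_⟩
        simp only [Finset.mem_filter, Finset.mem_univ, true_and]
        intro h0
        exact hb' (by simp [hc', Function.update_of_ne hbE, h0])
      have h1 := Finset.card_le_card hsubset
      have h2 := Finset.card_erase_of_mem hES
      have h3 := Finset.card_pos.mpr ⟨E, hES⟩
      omega
    have hsupp' : ∀ b, c' b ≠ 0 → b ∈ T := by
      intro b hb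
      by_cases hbE : b = E
      · subst hbE; exact absurd (by simp [hc']) hb
      · exact hsupp b (by simpa [hc', Function.update_of_ne hbE] using hb)
    have hca : c' a = c a := Function.update_of_ne haE 0 c
    by_cases hxw : x = w <;> by_cases hxu : x = u
    · -- x = w and x = u : impossible
      exfalso
      rw [if_pos hxw, if_pos hxu] at hkey
      rcases hinc1 with h | h <;> rw [h] at hkey <;> omega
    · -- x = w : new target pair (u, o)
      subst hxw
      rw [if_pos rfl, if_neg hxu] at hkey
      have hfin : ∀ v, ∑ b, c' b * incZ hd tl b v
          = (if v = o then 1 else 0) - (if v = u then 1 else 0) := by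
        intro v
        rw [hsum' v, hEterm v, hkey]
        ring
      have := ih c' u o hcard' hsupp' hfin a
      rwa [hca] at this
    · -- x = u : new target pair (o, w)
      subst hxu
      rw [if_neg hxw, if_pos rfl] at hkey
      have hfin : ∀ v, ∑ b, c' b * incZ hd tl b v
          = (if v = w then 1 else 0) - (if v = o then 1 else 0) := by
        intro v
        rw [hsum' v, hEterm v, hkey]
        ring
      have := ih c' o w hcard' hsupp' hfin a
      rwa [hca] at this
    · -- neither : impossible
      exfalso
      rw [if_neg hxw, if_neg hxu] at hkey
      rcases hinc1 with h | h <;> rw [h] at hkey <;> omega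

/-- Reachability through `T'` produces integer coefficients expressing a difference of vertex
indicators in terms of incidence rows of `T'`. -/
lemma exists_coeffs [Fintype Eg] {T' : Set Eg} (hne : ∀ e : Eg, hd e ≠ tl e)
    {u w : Vt} (h : Relation.ReflTransGen (Adj hd tl T') u w) :
    ∃ c : Eg → ℤ, (∀ a, c a ≠ 0 → a ∈ T') ∧
      ∀ v, ∑ a, c a * incZ hd tl a v
        = (if v = w then 1 else 0) - (if v = u then 1 else 0) := by
  classical
  induction h with
  | refl => exact ⟨0, by simp, by simp⟩
  | @tail b w hub hbw ih =>
    obtain ⟨c, hcsupp, hcsum⟩ := ih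
    obtain ⟨E, hET, hor⟩ := hbw
    have key : ∀ (s : ℤ), ∃ c' : Eg → ℤ, (∀ a, c' a ≠ 0 → a ∈ T') ∧
        ∀ v, ∑ a, c' a * incZ hd tl a v
          = ((if v = b then 1 else 0) - (if v = u then 1 else 0)) + s * incZ hd tl E v := by
      intro s
      refine ⟨fun x => c x + (if x = E then s else 0), ?_, ?_⟩
      · intro a ha
        by_cases haE : a = E
        · subst haE; exact hET
        · simp only [if_neg haE, add_zero] at ha
          exact hcsupp a ha
      · intro v
        have hterm : ∀ x, (c x + (if x = E then s else 0)) * incZ hd tl x v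
            = c x * incZ hd tl x v + (if x = E then s * incZ hd tl x v else 0) := by
          intro x
          by_cases hx : x = E <;> simp [hx, add_mul]
        rw [Finset.sum_congr rfl (fun x _ => hterm x), Finset.sum_add_distrib, hcsum v,
          Finset.sum_ite_eq' Finset.univ E (fun x => s * incZ hd tl x v),
          if_pos (Finset.mem_univ E)]
    rcases hor with ⟨h1, h2⟩ | ⟨h1, h2⟩
    · -- tl E = b, hd E = w : traverse forwards
      obtain ⟨c', hs, hv⟩ := key 1
      refine ⟨c', hs, fun v => ?_⟩
      rw [hv v, incZ_eq hd tl (hne E), h1, h2]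
      ring
    · -- hd E = b, tl E = w : traverse backwards
      obtain ⟨c', hs, hv⟩ := key (-1)
      refine ⟨c', hs, fun v => ?_⟩
      rw [hv v, incZ_eq hd tl (hne E), h1, h2]
      ring

lemma sum_support_subtype [Fintype Eg] {p : Eg → Prop} [DecidablePred p]
    (c : Eg → ℤ) (h : ∀ e, c e ≠ 0 → p e) (X : Eg → ℤ) :
    ∑ g : {y // p y}, c g.1 * X g.1 = ∑ e, c e * X e := by
  classical
  calc ∑ g : {y // p y}, c g.1 * X g.1
      = ∑ e ∈ Finset.univ.filter p, c e * X e :=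
        (Finset.sum_subtype (Finset.univ.filter p) (by simp) (fun e => c e * X e)).symm
    _ = ∑ e, c e * X e := by
        apply Finset.sum_filter_of_ne
        intro x _ hx
        exact h x (fun h0 => hx (by rw [h0, zero_mul]))

/-- Every incidence row is a `{0, ±1}`-combination of the rows of a spanning forest. -/
lemma exists_row [Fintype Eg] {T' : Set Eg} (hne : ∀ e : Eg, hd e ≠ tl e)
    (hacyc' : ∀ l e v σ, ¬ IsCycleIn hd tl T' l e v σ)
    (hreach' : ∀ u w, Relation.ReflTransGen (Adj hd tl T') u w ↔
      Relation.ReflTransGen (Adj hd tl Set.univ) u w)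
    (f : Eg) :
    ∃ c : Eg → ℤ, (∀ a, c a ≠ 0 → a ∈ T') ∧ (∀ a, c a = 0 ∨ c a = 1 ∨ c a = -1) ∧
      ∀ v, ∑ a, c a * incZ hd tl a v = incZ hd tl f v := by
  classical
  have hadj : Adj hd tl Set.univ (tl f) (hd f) := ⟨f, Set.mem_univ f, Or.inl ⟨rfl, rfl⟩⟩
  have hr : Relation.ReflTransGen (Adj hd tl T') (tl f) (hd f) :=
    (hreach' _ _).mpr (Relation.ReflTransGen.single hadj)
  obtain ⟨c, h1, h2⟩ := exists_coeffs hd tl hne hr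
  refine ⟨c, h1, ?_, fun v => by rw [h2 v, incZ_eq hd tl (hne f)]⟩
  exact coeff_pm hd tl hne hacyc' (Finset.univ.filter (fun a => c a ≠ 0)).card c
    (tl f) (hd f) le_rfl h1 h2

/-- If two matrices both express one family of forest rows in terms of the other, they are
mutually inverse. -/
lemma inverse_aux [Fintype Eg] {A B : Set Eg} [DecidablePred (· ∈ A)] [DecidablePred (· ∈ B)]
    [DecidableEq {f // f ∈ A}]
    (hne : ∀ e : Eg, hd e ≠ tl e)
    (hAacyc : ∀ l e v σ, ¬ IsCycleIn hd tl A l e v σ)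
    (M : Matrix {f // f ∈ A} {f // f ∈ B} ℤ) (N : Matrix {f // f ∈ B} {f // f ∈ A} ℤ)
    (rowA : ∀ (f : {f // f ∈ A}) (v : Vt),
      ∑ g : {f // f ∈ B}, M f g * incZ hd tl g.1 v = incZ hd tl f.1 v)
    (rowB : ∀ (g : {f // f ∈ B}) (v : Vt),
      ∑ f : {f // f ∈ A}, N g f * incZ hd tl f.1 v = incZ hd tl g.1 v) :
    M * N = 1 := by
  classical
  ext f h
  set κ : Eg → ℤ := fun x =>
    if hx : x ∈ A then ((M * N) f ⟨x, hx⟩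
      - (1 : Matrix {f // f ∈ A} {f // f ∈ A} ℤ) f ⟨x, hx⟩) else 0 with hκ
  have hκsupp : ∀ x, κ x ≠ 0 → x ∈ A := by
    intro x hx
    by_contra hxA
    rw [hκ] at hx
    simp only [dif_neg hxA] at hx
    exact hx rfl
  have hκsub : ∀ g : {f // f ∈ A}, κ g.1 = (M * N) f g - (1 : Matrix {f // f ∈ A} {f // f ∈ A} ℤ) f g := by
    intro g
    rw [hκ]
    simp only [dif_pos g.2, Subtype.coe_eta]
  have hκsum : ∀ v, ∑ x, κ x * incZ hd tl x v = 0 := by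
    intro v
    rw [← sum_support_subtype κ hκsupp (fun e => incZ hd tl e v)]
    have h1 : ∑ h' : {f // f ∈ A}, (M * N) f h' * incZ hd tl h'.1 v
        = incZ hd tl f.1 v := by
      simp only [Matrix.mul_apply]
      calc ∑ h' : {f // f ∈ A}, (∑ g : {f // f ∈ B}, M f g * N g h') * incZ hd tl h'.1 v
          = ∑ h' : {f // f ∈ A}, ∑ g : {f // f ∈ B},
              M f g * (N g h' * incZ hd tl h'.1 v) := by
            refine Finset.sum_congr rfl (fun h' _ => ?_)
            rw [Finset.sum_mul]
            exact Finset.sum_congr rfl (fun g _ => by ring)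
        _ = ∑ g : {f // f ∈ B}, ∑ h' : {f // f ∈ A},
              M f g * (N g h' * incZ hd tl h'.1 v) := Finset.sum_comm
        _ = ∑ g : {f // f ∈ B}, M f g * ∑ h' : {f // f ∈ A},
              N g h' * incZ hd tl h'.1 v := by
            exact Finset.sum_congr rfl (fun g _ => (Finset.mul_sum _ _ _).symm)
        _ = ∑ g : {f // f ∈ B}, M f g * incZ hd tl g.1 v := by
            exact Finset.sum_congr rfl (fun g _ => by rw [rowB g v])
        _ = incZ hd tl f.1 v := rowA f v
    have h2 : ∑ h' : {f // f ∈ A}, (1 : Matrix {f // f ∈ A} {f // f ∈ A} ℤ) f h' * incZ hd tl h'.1 v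
        = incZ hd tl f.1 v := by
      simp [Matrix.one_apply]
    calc ∑ g : {f // f ∈ A}, κ g.1 * incZ hd tl g.1 v
        = ∑ g : {f // f ∈ A}, ((M * N) f g * incZ hd tl g.1 v
            - (1 : Matrix {f // f ∈ A} {f // f ∈ A} ℤ) f g * incZ hd tl g.1 v) := by
          refine Finset.sum_congr rfl (fun g _ => ?_)
          rw [hκsub g, sub_mul]
      _ = 0 := by rw [Finset.sum_sub_distrib, h1, h2, sub_self]
  have hz := indep hd tl hne hAacyc κ hκsupp hκsum h.1
  have h3 := (hκsub h).symm.trans hz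
  omega

end Stmt10Aux

/-- Two spanning forests `T`, `T'` of the same graph `(V, C)` have the same size, and there is
a change-of-basis matrix `S` with entries in `{-1, 0, 1}`, invertible over `ℤ`, expressing the
`T`-rows of the incidence matrix `Ω` in terms of the `T'`-rows. -/
theorem stmt10 {Eg Vt : Type*} [Fintype Eg] [Fintype Vt] [DecidableEq Vt]
    (hd tl : Eg → Vt) (hne : ∀ e, hd e ≠ tl e) (T T' : Set Eg)
    [DecidablePred (· ∈ T)] [DecidablePred (· ∈ T')] [DecidableEq {f // f ∈ T}]
    [DecidableEq {f // f ∈ T'}]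
    (hT : IsSpanningForest hd tl Set.univ T) (hT' : IsSpanningForest hd tl Set.univ T') :
    Nat.card {f // f ∈ T} = Nat.card {f // f ∈ T'} ∧
      ∃ (S : Matrix {f // f ∈ T} {f // f ∈ T'} ℤ) (S' : Matrix {f // f ∈ T'} {f // f ∈ T} ℤ),
        (∀ a b, S a b = 0 ∨ S a b = 1 ∨ S a b = -1) ∧
        S * S' = 1 ∧ S' * S = 1 ∧
        ∀ (f : {f // f ∈ T}) (u : Vt),
          inc hd tl f.1 u = ∑ f' : {f // f ∈ T'}, (S f f' : ℝ) * inc hd tl f'.1 u := by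
  classical
  obtain ⟨-, hTacyc, hTreach⟩ := hT
  obtain ⟨-, hT'acyc, hT'reach⟩ := hT'
  choose c hc1 hc2 hc3 using fun f : {f // f ∈ T} =>
    Stmt10Aux.exists_row hd tl hne hT'acyc hT'reach f.1
  choose d hd1 hd2 hd3 using fun g : {f // f ∈ T'} =>
    Stmt10Aux.exists_row hd tl hne hTacyc hTreach g.1
  set S : Matrix {f // f ∈ T} {f // f ∈ T'} ℤ := fun f g => c f g.1 with hSdef
  set S' : Matrix {f // f ∈ T'} {f // f ∈ T} ℤ := fun g f => d g f.1 with hS'def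
  have rowT : ∀ (f : {f // f ∈ T}) (v : Vt),
      ∑ g : {f // f ∈ T'}, S f g * Stmt10Aux.incZ hd tl g.1 v
        = Stmt10Aux.incZ hd tl f.1 v := by
    intro f v
    calc ∑ g : {f // f ∈ T'}, S f g * Stmt10Aux.incZ hd tl g.1 v
        = ∑ e, c f e * Stmt10Aux.incZ hd tl e v := by
          rw [hSdef]
          exact Stmt10Aux.sum_support_subtype (c f) (hc1 f)
            (fun e => Stmt10Aux.incZ hd tl e v)
      _ = Stmt10Aux.incZ hd tl f.1 v := hc3 f v
  have rowT' : ∀ (g : {f // f ∈ T'}) (v : Vt),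
      ∑ f : {f // f ∈ T}, S' g f * Stmt10Aux.incZ hd tl f.1 v
        = Stmt10Aux.incZ hd tl g.1 v := by
    intro g v
    calc ∑ f : {f // f ∈ T}, S' g f * Stmt10Aux.incZ hd tl f.1 v
        = ∑ e, d g e * Stmt10Aux.incZ hd tl e v := by
          rw [hS'def]
          exact Stmt10Aux.sum_support_subtype (d g) (hd1 g)
            (fun e => Stmt10Aux.incZ hd tl e v)
      _ = Stmt10Aux.incZ hd tl g.1 v := hd3 g v
  have inv1 : S * S' = 1 := Stmt10Aux.inverse_aux hd tl hne hTacyc S S' rowT rowT'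
  have inv2 : S' * S = 1 := Stmt10Aux.inverse_aux hd tl hne hT'acyc S' S rowT' rowT
  have hcard : Nat.card {f // f ∈ T} = Nat.card {f // f ∈ T'} := by
    have equiv := Matrix.toLin'OfInv inv1 inv2
    have h1 := equiv.finrank_eq
    rw [Module.finrank_pi, Module.finrank_pi] at h1
    simpa [Nat.card_eq_fintype_card] using h1
  refine ⟨hcard, S, S', fun a b => hc2 a b.1, inv1, inv2, ?_⟩
  intro f u
  have hcast : ∀ (e : Eg) (vv : Vt),
      inc hd tl e vv = ((Stmt10Aux.incZ hd tl e vv : ℤ) : ℝ) := by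
    intro e vv
    simp only [inc, Stmt10Aux.incZ, Matrix.of_apply]
    split_ifs <;> norm_num
  rw [hcast, ← rowT f u]
  push_cast
  refine Finset.sum_congr rfl (fun g _ => ?_)
  rw [hcast]
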